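/- Let n ≥ 2 and let α_1,…,α_{n−1} ≥ 0. For each i ∈ {1,…,n−1} put S_i = {x ∈ ℝⁿ : |x_{i+1} − x_i| ≤ α_i}, and let S_odd be the intersection of the sets S_i over all odd i ∈ {1,…,n−1}. Then for every x ∈ ℝⁿ, the projection of x onto S_odd is the vector obtained from x by replacing, for each odd i ∈ {1,…,n−1}, the pair of coordinates (x_i, x_{i+1}) by: ((x_i + x_{i+1} + α_i)/2, (x_i + x_{i+1} − α_i)/2) if x_i − x_{i+1} > α_i; (x_i, x_{i+1}) if |x_{i+1} − x_i| ≤ α_i; and ((x_i + x_{i+1} − α_i)/2, (x_i + x_{i+1} + α_i)/2) if x_{i+1} − x_i > α_i; the last coordinate x_n is left unchanged when n is odd. -/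

import Mathlib

/-!
The constraints defining `S_odd` act on pairwise disjoint pairs of coordinates, so the squared
distance to a point of `S_odd` splits into a sum over these pairs (plus the unconstrained last
coordinate when `n` is odd), and it is enough to project each pair onto the planar band
`{(p, w) | |w - p| ≤ α}`. In the rotated coordinates `p + w`, `p - w` that band is a slab, onto
which the projection only clamps `p - w` to `[-α, α]`.
-/

open Finset in
theorem Finset.sum_range_le_sum_range_of_pairs {M : Type*} [AddCommMonoid M] [PartialOrder M]
    [IsOrderedAddMonoid M] {f g : ℕ → M} {n : ℕ}
    (hpair : ∀ k, k + 1 < n → k % 2 = 0 → f k + f (k + 1) ≤ g k + g (k + 1))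
    (hlast : ∀ k, k + 1 = n → k % 2 = 0 → f k ≤ g k) :
    ∑ k ∈ range n, f k ≤ ∑ k ∈ range n, g k := by
  induction n using Nat.strongRecOn with
  | ind n ih =>
    rcases n with _ | m
    · simp
    rcases Nat.even_or_odd' m with ⟨l, rfl | rfl⟩
    · rw [sum_range_succ, sum_range_succ]
      exact add_le_add (ih _ (by omega) (fun k hk => hpair k (by omega)) (fun k hk => by omega))
        (hlast _ rfl (by omega))
    · rw [sum_range_succ f, sum_range_succ f, sum_range_succ g, sum_range_succ g, add_assoc,
        add_assoc]
      exact add_le_add (ih _ (by omega) (fun k hk => hpair k (by omega)) (fun k hk => by omega))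
        (hpair _ (by omega) (by omega))

theorem EuclideanSpace.norm_le_norm_of_sq_le_on_pairs {n : ℕ} (u v : EuclideanSpace ℝ (Fin n))
    (hpair : ∀ k (h : k + 1 < n), k % 2 = 0 →
      u ⟨k, Nat.lt_of_succ_lt h⟩ ^ 2 + u ⟨k + 1, h⟩ ^ 2 ≤
        v ⟨k, Nat.lt_of_succ_lt h⟩ ^ 2 + v ⟨k + 1, h⟩ ^ 2)
    (hlast : ∀ k (h : k < n), k + 1 = n → k % 2 = 0 → u ⟨k, h⟩ ^ 2 ≤ v ⟨k, h⟩ ^ 2) :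
    ‖u‖ ≤ ‖v‖ := by
  have hsum (w : EuclideanSpace ℝ (Fin n)) :
      ‖w‖ ^ 2 = ∑ k ∈ Finset.range n, if h : k < n then w ⟨k, h⟩ ^ 2 else 0 := by
    rw [EuclideanSpace.norm_sq_eq, ← Fin.sum_univ_eq_sum_range]
    simp
  rw [← sq_le_sq₀ (norm_nonneg u) (norm_nonneg v), hsum, hsum]
  refine Finset.sum_range_le_sum_range_of_pairs (fun k hk hk2 => ?_) (fun k hk hk2 => ?_)
  · simpa [hk, show k < n by omega] using hpair k hk hk2
  · simpa [show k < n by omega] using hlast k (by omega) hk hk2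

noncomputable def bandProj (α a b : ℝ) : ℝ × ℝ :=
  if a - b > α then ((a + b + α) / 2, (a + b - α) / 2)
  else if b - a > α then ((a + b - α) / 2, (a + b + α) / 2)
  else (a, b)

theorem abs_bandProj_sub_le {α : ℝ} (hα : 0 ≤ α) (a b : ℝ) :
    |(bandProj α a b).2 - (bandProj α a b).1| ≤ α := by
  unfold bandProj
  split_ifs <;> rw [abs_le] <;> constructor <;> linarith

theorem bandProj_sq_dist_le {α a b p w : ℝ} (h : |w - p| ≤ α) :
    (a - (bandProj α a b).1) ^ 2 + (b - (bandProj α a b).2) ^ 2 ≤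
      (a - p) ^ 2 + (b - w) ^ 2 := by
  rw [abs_le] at h
  unfold bandProj
  split_ifs
  · nlinarith [sq_nonneg (a - p + b - w),
      mul_nonneg (by linarith : (0 : ℝ) ≤ (a - p) - (b - w) - (a - b - α))
        (by linarith : (0 : ℝ) ≤ (a - p) - (b - w) + (a - b - α))]
  · nlinarith [sq_nonneg (a - p + b - w),
      mul_nonneg (by linarith : (0 : ℝ) ≤ (b - w) - (a - p) - (b - a - α))
        (by linarith : (0 : ℝ) ≤ (b - w) - (a - p) + (b - a - α))]
  · simpa using add_nonneg (sq_nonneg (a - p)) (sq_nonneg (b - w))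

theorem stmt_2 (n : ℕ) (α : ℕ → ℝ) (hα : ∀ j, 0 ≤ α j)
    (x : EuclideanSpace ℝ (Fin n)) :
    let Sodd : Set (EuclideanSpace ℝ (Fin n)) :=
      {z | ∀ j : ℕ, ∀ h : j + 1 < n, j % 2 = 0 →
        |z ⟨j + 1, h⟩ - z ⟨j, by omega⟩| ≤ α j}
    let q : EuclideanSpace ℝ (Fin n) := WithLp.toLp 2 (fun k : Fin n =>
      if (k : ℕ) % 2 = 0 then
        if h : (k : ℕ) + 1 < n then
          if x k - x ⟨(k : ℕ) + 1, h⟩ > α (k : ℕ) then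
            (x k + x ⟨(k : ℕ) + 1, h⟩ + α (k : ℕ)) / 2
          else if x ⟨(k : ℕ) + 1, h⟩ - x k > α (k : ℕ) then
            (x k + x ⟨(k : ℕ) + 1, h⟩ - α (k : ℕ)) / 2
          else x k
        else x k
      else
        let j : Fin n := ⟨(k : ℕ) - 1, Nat.lt_of_le_of_lt (Nat.sub_le _ _) k.isLt⟩
        if x j - x k > α ((k : ℕ) - 1) then (x j + x k - α ((k : ℕ) - 1)) / 2
        else if x k - x j > α ((k : ℕ) - 1) then (x j + x k + α ((k : ℕ) - 1)) / 2
        else x k)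
    q ∈ Sodd ∧ ∀ z ∈ Sodd, ‖x - q‖ ≤ ‖x - z‖ := by
  intro Sodd q
  have hq_pair (k : ℕ) (h : k + 1 < n) (hk : k % 2 = 0) :
      q ⟨k, by omega⟩ = (bandProj (α k) (x ⟨k, by omega⟩) (x ⟨k + 1, h⟩)).1 ∧
        q ⟨k + 1, h⟩ = (bandProj (α k) (x ⟨k, by omega⟩) (x ⟨k + 1, h⟩)).2 := by
    constructor
    · show (if k % 2 = 0 then _ else _) = _
      rw [if_pos hk, dif_pos h]
      unfold bandProj
      split_ifs <;> rfl
    · show (if (k + 1) % 2 = 0 then _ else _) = _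
      rw [if_neg (by omega)]
      simp only [Nat.add_sub_cancel]
      unfold bandProj
      split_ifs <;> rfl
  have hq_last (k : ℕ) (h : k < n) (hkn : k + 1 = n) (hk : k % 2 = 0) :
      q ⟨k, h⟩ = x ⟨k, h⟩ := by
    simp [q, hk, hkn]
  refine ⟨fun k h hk => ?_, fun z hz => ?_⟩
  · rw [(hq_pair k h hk).1, (hq_pair k h hk).2]
    exact abs_bandProj_sub_le (hα k) _ _
  · refine EuclideanSpace.norm_le_norm_of_sq_le_on_pairs _ _ (fun k h hk => ?_)
      (fun k h hkn hk => ?_)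
    · simp only [PiLp.sub_apply, (hq_pair k h hk).1, (hq_pair k h hk).2]
      exact bandProj_sq_dist_le (hz k h hk)
    · simpa [hq_last k h hkn hk] using sq_nonneg _
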